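/- Let H be a real Hilbert space and let A, B ⊆ H be nonempty closed convex sets. If x ∉ A and R_B(R_A(x)) = x, then the midpoint (x + R_A(x))/2 is the unique circumcenter of x with respect to (A, B), and it satisfies (x + R_A(x))/2 = P_A(x) = P_B(R_A(x)); in particular this circumcenter lies in A ∩ B. -/

import Mathlib

open RealInnerProductSpace Pointwise

/-- `p` is the metric projection of `x` onto `C`: the point of `C` such that
`⟪y - p, x - p⟫ ≤ 0` for all `y ∈ C`. -/
def IsProj {E : Type*} [NormedAddCommGroup E] [InnerProductSpace ℝ E]
    (C : Set E) (x p : E) : Prop :=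
  p ∈ C ∧ ∀ y ∈ C, ⟪y - p, x - p⟫ ≤ 0

/-- `c` is a circumcenter of `x` with respect to `(A, B)`: writing `R_A x = 2 P_A x - x`
and `R_B (R_A x) = 2 P_B (R_A x) - R_A x`, the point `c` lies in the affine span of
`{x, R_A x, R_B (R_A x)}` and is equidistant from these three points. -/
def IsCircumcenter {E : Type*} [NormedAddCommGroup E] [InnerProductSpace ℝ E]
    (A B : Set E) (x c : E) : Prop :=
  ∃ pa pb : E, IsProj A x pa ∧ IsProj B ((2 : ℝ) • pa - x) pb ∧
    c ∈ affineSpan ℝ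
      ({x, (2 : ℝ) • pa - x, (2 : ℝ) • pb - ((2 : ℝ) • pa - x)} : Set E) ∧
    ‖c - x‖ = ‖c - ((2 : ℝ) • pa - x)‖ ∧
    ‖c - x‖ = ‖c - ((2 : ℝ) • pb - ((2 : ℝ) • pa - x))‖

/-! Because `R_B (R_A x) = x`, the three points defining the circumcenter reduce to `x` and
`R_A x`, which are distinct as `x ∉ A`. On the line through two distinct points the only
point equidistant from both is their midpoint, here `P_A x`; comparing `2 P_B (R_A x) = x + R_A x`
with `2 P_A x = x + R_A x` gives `P_B (R_A x) = P_A x`. -/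

theorem exists_lineMap_eq_of_mem_affineSpan_pair {k V P : Type*} [Ring k] [AddCommGroup V]
    [Module k V] [AddTorsor V P] {a b c : P} (hc : c ∈ line[k, a, b]) :
    ∃ r : k, AffineMap.lineMap a b r = c := by
  rw [← vsub_vadd c a, vadd_left_mem_affineSpan_pair] at hc
  obtain ⟨r, hr⟩ := hc
  exact ⟨r, by rw [AffineMap.lineMap_apply, hr, vsub_vadd]⟩

theorem mem_affineSpan_pair_and_dist_eq_iff_eq_midpoint {V P : Type*} [NormedAddCommGroup V]
    [NormedSpace ℝ V] [MetricSpace P] [NormedAddTorsor V P] {a b c : P} (hab : a ≠ b) :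
    c ∈ line[ℝ, a, b] ∧ dist c a = dist c b ↔ c = midpoint ℝ a b := by
  constructor
  · rintro ⟨hc, hdist⟩
    obtain ⟨r, rfl⟩ := exists_lineMap_eq_of_mem_affineSpan_pair hc
    rw [dist_lineMap_left, dist_lineMap_right, Real.norm_eq_abs, Real.norm_eq_abs] at hdist
    have habs : |r| = |1 - r| := mul_right_cancel₀ (dist_ne_zero.mpr hab) hdist
    have hr : r = ⅟2 := by
      rw [invOf_eq_inv]; rcases abs_eq_abs.mp habs with h | h <;> linarith
    rw [hr, midpoint]
  · rintro rfl
    exact ⟨AffineMap.lineMap_mem_affineSpan_pair _ _ _, by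
      rw [dist_midpoint_left, dist_midpoint_right]⟩

section Projection

variable {E : Type*} [NormedAddCommGroup E] [InnerProductSpace ℝ E]

theorem IsProj.unique {C : Set E} {x p q : E} (hp : IsProj C x p) (hq : IsProj C x q) :
    p = q := by
  have hpq : ⟪q - p, q - p⟫ ≤ 0 := by
    have key : ⟪q - p, q - p⟫ = ⟪q - p, x - p⟫ + ⟪p - q, x - q⟫ := by
      simp only [inner_sub_left, inner_sub_right, real_inner_comm]; ring
    linarith [hp.2 q hq.1, hq.2 p hp.1]
  exact (sub_eq_zero.mp (real_inner_self_nonpos.mp hpq)).symm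

theorem isCircumcenter_iff {A B : Set E} {x pa pb c : E} (hpa : IsProj A x pa)
    (hpb : IsProj B ((2 : ℝ) • pa - x) pb) :
    IsCircumcenter A B x c ↔
      c ∈ affineSpan ℝ
        ({x, (2 : ℝ) • pa - x, (2 : ℝ) • pb - ((2 : ℝ) • pa - x)} : Set E) ∧
      ‖c - x‖ = ‖c - ((2 : ℝ) • pa - x)‖ ∧
      ‖c - x‖ = ‖c - ((2 : ℝ) • pb - ((2 : ℝ) • pa - x))‖ := by
  constructor
  · rintro ⟨pa', pb', hpa', hpb', hc⟩
    obtain rfl := hpa'.unique hpa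
    obtain rfl := hpb'.unique hpb
    exact hc
  · exact fun hc => ⟨pa, pb, hpa, hpb, hc⟩

end Projection

theorem crm_step_two_cycle_general
    {H : Type*} [NormedAddCommGroup H] [InnerProductSpace ℝ H]
    (A B : Set H)
    (x pa pb : H) (hxA : x ∉ A) (hpa : IsProj A x pa)
    (hpb : IsProj B ((2 : ℝ) • pa - x) pb)
    (hfix : (2 : ℝ) • pb - ((2 : ℝ) • pa - x) = x) :
    (∀ c : H, IsCircumcenter A B x c ↔ c = (2 : ℝ)⁻¹ • (x + ((2 : ℝ) • pa - x))) ∧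
    (2 : ℝ)⁻¹ • (x + ((2 : ℝ) • pa - x)) = pa ∧
    (2 : ℝ)⁻¹ • (x + ((2 : ℝ) • pa - x)) = pb ∧
    (2 : ℝ)⁻¹ • (x + ((2 : ℝ) • pa - x)) ∈ A ∩ B := by
  have hmid : (2 : ℝ)⁻¹ • (x + ((2 : ℝ) • pa - x)) = pa := by module
  have hpb_eq : pb = pa := by
    have h2 : (2 : ℝ) • pb = (2 : ℝ) • pa := by rw [sub_eq_iff_eq_add.mp hfix]; abel
    exact smul_right_injective H two_ne_zero h2
  have hpa_ne : pa ≠ x := fun h => hxA (h ▸ hpa.1)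
  have hx_ne : x ≠ (2 : ℝ) • pa - x := fun h => hpa_ne (by rw [← hmid, ← h]; module)
  have hpoints : ({x, (2 : ℝ) • pa - x, x} : Set H) = {x, (2 : ℝ) • pa - x} := by
    rw [Set.insert_comm, Set.pair_eq_singleton, Set.pair_comm]
  have hmidpoint : midpoint ℝ x ((2 : ℝ) • pa - x) = pa := by
    rw [midpoint_eq_smul_add, invOf_eq_inv, hmid]
  refine ⟨fun c => ?_, hmid, hmid.trans hpb_eq.symm, ?_⟩
  · rw [isCircumcenter_iff hpa hpb, hfix, hpoints, ← dist_eq_norm, ← dist_eq_norm,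
      and_iff_left rfl, mem_affineSpan_pair_and_dist_eq_iff_eq_midpoint hx_ne, hmidpoint, hmid]
  · rw [hmid]
    exact ⟨hpa.1, hpb_eq ▸ hpb.1⟩

/-- For nonempty closed convex sets `A, B` in a real Hilbert space, suppose
`x ∉ A`, `pa = P_A x`, `pb = P_B (R_A x)` and `R_B (R_A x) = x`. Then the midpoint
`(x + R_A x)/2` is the unique circumcenter of `x` with respect to `(A, B)`, and it equals
`P_A x = P_B (R_A x)`; in particular it lies in `A ∩ B`. -/
theorem crm_step_two_cycle
    {H : Type*} [NormedAddCommGroup H] [InnerProductSpace ℝ H] [CompleteSpace H]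
    (A B : Set H) (hAne : A.Nonempty) (hAcl : IsClosed A) (hAcv : Convex ℝ A)
    (hBne : B.Nonempty) (hBcl : IsClosed B) (hBcv : Convex ℝ B)
    (x pa pb : H) (hxA : x ∉ A) (hpa : IsProj A x pa)
    (hpb : IsProj B ((2 : ℝ) • pa - x) pb)
    (hfix : (2 : ℝ) • pb - ((2 : ℝ) • pa - x) = x) :
    (∀ c : H, IsCircumcenter A B x c ↔ c = (2 : ℝ)⁻¹ • (x + ((2 : ℝ) • pa - x))) ∧
    (2 : ℝ)⁻¹ • (x + ((2 : ℝ) • pa - x)) = pa ∧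
    (2 : ℝ)⁻¹ • (x + ((2 : ℝ) • pa - x)) = pb ∧
    (2 : ℝ)⁻¹ • (x + ((2 : ℝ) • pa - x)) ∈ A ∩ B :=
  crm_step_two_cycle_general A B x pa pb hxA hpa hpb hfix
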